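/- arXiv:1410.2654 — 5 statements merged into one kernel-verified Lean document; each statement's English description precedes it below -/
import Mathlib

section
/- Let H be a real Hilbert space, let α₁, α₂ ∈ (0,1), and let T₁, T₂ : H → H be α₁-averaged and α₂-averaged operators respectively (i.e., Tᵢ = (1−αᵢ)I + αᵢNᵢ for some nonexpansive Nᵢ : H → H). Let z* be a fixed point of T₁ ∘ T₂ and set α₁₂ := (α₁ + α₂ − 2α₁α₂)/(1 − α₁α₂). Let ε ∈ (0,1), let z⁰ ∈ H, let (λ_k)_{k≥0} ⊆ (0, (1−ε)(1+εα₁₂)/α₁₂), and define z^{k+1} := (1 − λ_k)z^k + λ_k (T₁ ∘ T₂)(z^k) for all k ≥ 0. Then Σ_{i=0}^∞ λ_i ‖(I − T₂)(z^i) − (I − T₂)(z*)‖² ≤ α₂(1 + 1/ε)‖z⁰ − z*‖² / (1 − α₂). -/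
/-!
Write `A = (1 - α₂)/α₂` and `B = (1 - α₁)/α₁`. An `α`-averaged map satisfies
`‖Tx - Ty‖² + (1 - α)/α ‖(I - T)x - (I - T)y‖² ≤ ‖x - y‖²`; applying this to `T₂` and then to
`T₁` bounds `‖T₁T₂ z - z*‖²` by `‖z - z*‖² - A‖a‖² - B‖b‖²`, where `a` and `b` are the residuals
of `T₂` at `z` and of `T₁` at `T₂ z` relative to `z*`, and `a + b` is the residual of `T₁T₂`.
In the relaxed step the overrelaxation costs `(λ - 1)‖a + b‖²`, which the step-size bound lets
us absorb into `p‖a‖² + B‖b‖²` with `p = A/(1 + ε)`, since `pB/(p + B) ‖a + b‖² ≤ p‖a‖² + B‖b‖²`.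
What remains is a Fejér-type decrease `‖z^{k+1} - z*‖² + λ_k (A - p)‖a_k‖² ≤ ‖z^k - z*‖²`,
which telescopes.
-/

theorem mul_div_add_mul_norm_add_sq_le {E : Type*} [SeminormedAddCommGroup E] {p q : ℝ}
    (hp : 0 < p) (hq : 0 < q) (a b : E) :
    p * q / (p + q) * ‖a + b‖ ^ 2 ≤ p * ‖a‖ ^ 2 + q * ‖b‖ ^ 2 := by
  have hab : ‖a + b‖ ≤ ‖a‖ + ‖b‖ := norm_add_le a b
  rw [div_mul_eq_mul_div, div_le_iff₀ (by positivity)]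
  nlinarith [sq_nonneg (p * ‖a‖ - q * ‖b‖), mul_pos hp hq, norm_nonneg (a + b),
    mul_le_mul hab hab (norm_nonneg _) (by positivity : 0 ≤ ‖a‖ + ‖b‖)]

theorem averagedness_constant_comp_eq {α₁ α₂ : ℝ} (hα₁ : α₁ ≠ 0) (hα₂ : α₂ ≠ 0)
    (hα₁₂ : α₁ * α₂ ≠ 1) :
    (α₁ + α₂ - 2 * α₁ * α₂) / (1 - α₁ * α₂)
      = ((1 - α₂) / α₂ + (1 - α₁) / α₁)
        / ((1 - α₂) / α₂ + (1 - α₁) / α₁ + (1 - α₂) / α₂ * ((1 - α₁) / α₁)) := by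
  have h : 1 - α₁ * α₂ ≠ 0 := sub_ne_zero.mpr hα₁₂.symm
  have h' : α₁ * (1 - α₂) + α₂ * (1 - α₁) + (1 - α₂) * (1 - α₁) = 1 - α₁ * α₂ := by ring
  field_simp
  rw [h', mul_div_cancel_left₀ _ h]
  ring

/-- With `s = AB/(A + B)` the bound on `l` reads `l ≤ (1 - ε)(1 + s + ε)`, and
`(1 - ε)(1 + s + ε) - 1 ≤ s/(1 + ε) ≤ AB/(A + (1 + ε)B)`. -/
theorem sub_one_le_of_le_relaxation_bound {A B ε l : ℝ} (hA : 0 < A) (hB : 0 < B) (hε₀ : 0 < ε)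
    (hε₁ : ε < 1)
    (hl : l ≤ (1 - ε) * (1 + ε * ((A + B) / (A + B + A * B))) / ((A + B) / (A + B + A * B))) :
    l - 1 ≤ A / (1 + ε) * B / (A / (1 + ε) + B) := by
  set s := A * B / (A + B) with hs
  have hs_pos : 0 < s := by positivity
  have hbound : (1 - ε) * (1 + ε * ((A + B) / (A + B + A * B))) / ((A + B) / (A + B + A * B))
      = (1 - ε) * (1 + s + ε) := by
    rw [hs]; field_simp
  have hharmonic : A / (1 + ε) * B / (A / (1 + ε) + B) = A * B / (A + (1 + ε) * B) := by
    field_simp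
  have hs_le : s / (1 + ε) ≤ A * B / (A + (1 + ε) * B) := by
    rw [hs, div_div, div_le_div_iff₀ (by positivity) (by positivity)]
    nlinarith [mul_pos (mul_pos (mul_pos hA hB) hA) hε₀]
  have hshrink : (1 - ε) * (1 + s + ε) - 1 ≤ s / (1 + ε) := by
    rw [le_div_iff₀ (by linarith)]
    nlinarith [mul_pos (mul_pos hε₀ hε₀) hs_pos, mul_pos (mul_pos hε₀ hε₀) hε₀]
  rw [hbound] at hl
  rw [hharmonic]
  linarith

theorem sum_range_le_of_add_le {c d : ℕ → ℝ} (hcd : ∀ k, d (k + 1) + c k ≤ d k)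
    (hd : ∀ k, 0 ≤ d k) (n : ℕ) :
    ∑ i ∈ Finset.range n, c i ≤ d 0 := by
  calc ∑ i ∈ Finset.range n, c i ≤ ∑ i ∈ Finset.range n, (d i - d (i + 1)) :=
        Finset.sum_le_sum fun k _ => by linarith [hcd k]
    _ = d 0 - d n := Finset.sum_range_sub' d n
    _ ≤ d 0 := by linarith [hd n]

def IsAveraged {E : Type*} [SeminormedAddCommGroup E] [NormedSpace ℝ E] (α : ℝ) (T : E → E) :
    Prop :=
  ∃ N : E → E, LipschitzWith 1 N ∧ ∀ x, T x = (1 - α) • x + α • N x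

section InnerProduct

variable {H : Type*} [NormedAddCommGroup H] [InnerProductSpace ℝ H]

theorem norm_one_sub_smul_add_smul_sq (a b : H) (t : ℝ) :
    ‖(1 - t) • a + t • b‖ ^ 2
      = (1 - t) * ‖a‖ ^ 2 + t * ‖b‖ ^ 2 - t * (1 - t) * ‖a - b‖ ^ 2 := by
  simp only [← real_inner_self_eq_norm_sq, inner_add_left, inner_add_right, inner_sub_left,
    inner_sub_right, real_inner_smul_left, real_inner_smul_right, real_inner_comm a b]
  ring

theorem IsAveraged.norm_sub_sq_add_le {α : ℝ} {T : H → H} (hT : IsAveraged α T) (hα : 0 < α)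
    (x y : H) :
    ‖T x - T y‖ ^ 2 + (1 - α) / α * ‖(x - T x) - (y - T y)‖ ^ 2 ≤ ‖x - y‖ ^ 2 := by
  obtain ⟨N, hN, hTN⟩ := hT
  have hdiff : T x - T y = (1 - α) • (x - y) + α • (N x - N y) := by
    rw [hTN, hTN]; module
  have hres : (x - T x) - (y - T y) = α • ((x - y) - (N x - N y)) := by
    rw [hTN, hTN]; module
  have hN_le : ‖N x - N y‖ ≤ ‖x - y‖ := by
    simpa [dist_eq_norm] using hN.dist_le_mul x y
  have hres_sq : (1 - α) / α * ‖α • ((x - y) - (N x - N y))‖ ^ 2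
      = α * (1 - α) * ‖(x - y) - (N x - N y)‖ ^ 2 := by
    rw [norm_smul, Real.norm_of_nonneg hα.le]
    field_simp
  rw [hdiff, hres, norm_one_sub_smul_add_smul_sq, hres_sq]
  nlinarith [mul_le_mul_of_nonneg_left (pow_le_pow_left₀ (norm_nonneg _) hN_le 2) hα.le]

theorem IsAveraged.norm_comp_sub_sq_add_le {α₁ α₂ : ℝ} {T₁ T₂ : H → H}
    (hT₁ : IsAveraged α₁ T₁) (hT₂ : IsAveraged α₂ T₂) (hα₁ : 0 < α₁) (hα₂ : 0 < α₂) (x y : H) :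
    ‖T₁ (T₂ x) - T₁ (T₂ y)‖ ^ 2 + (1 - α₂) / α₂ * ‖(x - T₂ x) - (y - T₂ y)‖ ^ 2
      + (1 - α₁) / α₁ * ‖(T₂ x - T₁ (T₂ x)) - (T₂ y - T₁ (T₂ y))‖ ^ 2 ≤ ‖x - y‖ ^ 2 := by
  linarith [hT₁.norm_sub_sq_add_le hα₁ (T₂ x) (T₂ y), hT₂.norm_sub_sq_add_le hα₂ x y]

theorem norm_one_sub_smul_add_smul_sq_add_le {u s a b : H} {A B p l : ℝ}
    (hsplit : u - s = a + b) (hdecr : ‖s‖ ^ 2 + A * ‖a‖ ^ 2 + B * ‖b‖ ^ 2 ≤ ‖u‖ ^ 2)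
    (hl : 0 ≤ l) (hp : 0 < p) (hB : 0 < B) (hlp : l - 1 ≤ p * B / (p + B)) :
    ‖(1 - l) • u + l • s‖ ^ 2 + (A - p) * (l * ‖a‖ ^ 2) ≤ ‖u‖ ^ 2 := by
  have hover : (l - 1) * ‖a + b‖ ^ 2 ≤ p * ‖a‖ ^ 2 + B * ‖b‖ ^ 2 :=
    (mul_le_mul_of_nonneg_right hlp (sq_nonneg _)).trans
      (mul_div_add_mul_norm_add_sq_le hp hB a b)
  rw [norm_one_sub_smul_add_smul_sq, hsplit]
  nlinarith [mul_nonneg hl (by linarith : 0 ≤ ‖u‖ ^ 2 - ‖s‖ ^ 2 - (l - 1) * ‖a + b‖ ^ 2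
    - (A - p) * ‖a‖ ^ 2)]

theorem IsAveraged.norm_relaxed_comp_sub_sq_add_le {α₁ α₂ ε l : ℝ} {T₁ T₂ : H → H}
    (hT₁ : IsAveraged α₁ T₁) (hT₂ : IsAveraged α₂ T₂) (hα₁ : α₁ ∈ Set.Ioo (0 : ℝ) 1) (hα₂ : α₂ ∈ Set.Ioo (0 : ℝ) 1)
    (hε : ε ∈ Set.Ioo (0 : ℝ) 1) (hl₀ : 0 ≤ l)
    (hl : l ≤ (1 - ε) * (1 + ε * ((α₁ + α₂ - 2 * α₁ * α₂) / (1 - α₁ * α₂)))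
      / ((α₁ + α₂ - 2 * α₁ * α₂) / (1 - α₁ * α₂)))
    {zs : H} (hzs : T₁ (T₂ zs) = zs) (x : H) :
    ‖(1 - l) • x + l • T₁ (T₂ x) - zs‖ ^ 2
      + ε * (1 - α₂) / (α₂ * (1 + ε)) * (l * ‖(x - T₂ x) - (zs - T₂ zs)‖ ^ 2)
        ≤ ‖x - zs‖ ^ 2 := by
  obtain ⟨hα₁₀, hα₁₁⟩ := hα₁
  obtain ⟨hα₂₀, hα₂₁⟩ := hα₂
  obtain ⟨hε₀, hε₁⟩ := hε
  have hα₁α₂ : α₁ * α₂ ≠ 1 := (mul_lt_one_of_nonneg_of_lt_one_left hα₁₀.le hα₁₁ hα₂₁.le).ne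
  rw [averagedness_constant_comp_eq hα₁₀.ne' hα₂₀.ne' hα₁α₂] at hl
  set A := (1 - α₂) / α₂
  set B := (1 - α₁) / α₁
  have hA : 0 < A := div_pos (by linarith) hα₂₀
  have hB : 0 < B := div_pos (by linarith) hα₁₀
  have hrelax : (1 - l) • x + l • T₁ (T₂ x) - zs = (1 - l) • (x - zs) + l • (T₁ (T₂ x) - zs) := by
    module
  have hcoeff : ε * (1 - α₂) / (α₂ * (1 + ε)) = A - A / (1 + ε) := by
    have : 1 + ε ≠ 0 := by linarith
    simp only [A]; field_simp; ring
  have hdecr := hT₁.norm_comp_sub_sq_add_le hT₂ hα₁₀ hα₂₀ x zs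
  rw [hzs] at hdecr
  rw [hrelax, hcoeff]
  exact norm_one_sub_smul_add_smul_sq_add_le (by abel) hdecr hl₀ (div_pos hA (by linarith)) hB
    (sub_one_le_of_le_relaxation_bound hA hB hε₀ hε₁ hl)

end InnerProduct

/-- summability bound for compositions of averaged operators. -/
theorem averaged_composition_gradient_sum
    {H : Type*} [NormedAddCommGroup H] [InnerProductSpace ℝ H]
    (α₁ α₂ : ℝ) (hα₁ : α₁ ∈ Set.Ioo (0 : ℝ) 1) (hα₂ : α₂ ∈ Set.Ioo (0 : ℝ) 1)
    (T₁ T₂ : H → H)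
    (h₁ : ∃ N : H → H, LipschitzWith 1 N ∧ ∀ x, T₁ x = (1 - α₁) • x + α₁ • N x)
    (h₂ : ∃ N : H → H, LipschitzWith 1 N ∧ ∀ x, T₂ x = (1 - α₂) • x + α₂ • N x)
    (zs : H) (hzs : T₁ (T₂ zs) = zs)
    (α₁₂ : ℝ) (hα₁₂ : α₁₂ = (α₁ + α₂ - 2 * α₁ * α₂) / (1 - α₁ * α₂))
    (ε : ℝ) (hε : ε ∈ Set.Ioo (0 : ℝ) 1)
    (lam : ℕ → ℝ)
    (hlam : ∀ k, lam k ∈ Set.Ioo (0 : ℝ) ((1 - ε) * (1 + ε * α₁₂) / α₁₂))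
    (z : ℕ → H)
    (hz : ∀ k, z (k + 1) = (1 - lam k) • z k + lam k • T₁ (T₂ (z k))) :
    ∀ n : ℕ, ∑ i ∈ Finset.range n, lam i * ‖(z i - T₂ (z i)) - (zs - T₂ zs)‖ ^ 2
      ≤ α₂ * (1 + 1 / ε) * ‖z 0 - zs‖ ^ 2 / (1 - α₂) := by
  intro n
  subst hα₁₂
  set c := ε * (1 - α₂) / (α₂ * (1 + ε))
  have hc : 0 < c := div_pos (mul_pos hε.1 (by linarith [hα₂.2])) (by nlinarith [hα₂.1, hε.1])
  have hstep : ∀ k, ‖z (k + 1) - zs‖ ^ 2 + c * (lam k * ‖(z k - T₂ (z k)) - (zs - T₂ zs)‖ ^ 2)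
      ≤ ‖z k - zs‖ ^ 2 := fun k => by
    rw [hz k]
    exact IsAveraged.norm_relaxed_comp_sub_sq_add_le h₁ h₂ hα₁ hα₂ hε (hlam k).1.le
      (hlam k).2.le hzs (z k)
  have hrhs : α₂ * (1 + 1 / ε) * ‖z 0 - zs‖ ^ 2 / (1 - α₂) = ‖z 0 - zs‖ ^ 2 / c := by
    have : 1 - α₂ ≠ 0 := by linarith [hα₂.2]
    have : 1 + ε ≠ 0 := by linarith [hε.1]
    simp only [c]
    field_simp [hα₂.1.ne', hε.1.ne']
    ring
  rw [hrhs, le_div_iff₀' hc, Finset.mul_sum]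
  exact sum_range_le_of_add_le (d := fun k => ‖z k - zs‖ ^ 2) hstep (fun _ => sq_nonneg _) n
end

section
/- If γ ∈ (0, 2β_V), then the FDRS operator T is α-averaged with α = 2β_V/(4β_V − γ); that is, there exists a nonexpansive map N : H → H such that T = (1 − α)I + αN. -/
/-!
Measure averagedness by the bound `‖T x - T y‖² + θ ‖(x - T x) - (y - T y)‖² ≤ ‖x - y‖²`; for
`θ = (1 - α) / α` it says that `T` is `α`-averaged. Under composition the constants combine
harmonically, to `θ₁ θ₂ / (θ₁ + θ₂)`.

The forward step `I - γ ∇h` has `θ₂ = (2 β_V - γ) / γ` because `∇h` is `β_V`-cocoercive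
(Baillon–Haddad). The backward step `½ (I + refl_{γf} ∘ refl_{χV})` has `θ₁ = 1`: the prox is firmly
nonexpansive, so `refl_{γf}` is nonexpansive, and `refl_{χV}` is an isometry. Hence `T` has
`θ = (2 β_V - γ) / (2 β_V) = (1 - α) / α` with `α = 2 β_V / (4 β_V - γ)`.
-/

open scoped RealInnerProductSpace NNReal
open Filter Set Topology

section

variable {H : Type*} [NormedAddCommGroup H] [InnerProductSpace ℝ H]

def HasAveragedBound (θ : ℝ) (T : H → H) : Prop :=
  ∀ x y, ‖T x - T y‖ ^ 2 + θ * ‖(x - T x) - (y - T y)‖ ^ 2 ≤ ‖x - y‖ ^ 2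

theorem hasAveragedBound_one_iff {S : H → H} :
    HasAveragedBound 1 S ↔ LipschitzWith 1 (fun x => (2 : ℝ) • S x - x) := by
  have key : ∀ x y, ‖((2 : ℝ) • S x - x) - ((2 : ℝ) • S y - y)‖ ^ 2 - ‖x - y‖ ^ 2
      = 2 * (‖S x - S y‖ ^ 2 + 1 * ‖(x - S x) - (y - S y)‖ ^ 2 - ‖x - y‖ ^ 2) := by
    intro x y
    have h₁ : ((2 : ℝ) • S x - x) - ((2 : ℝ) • S y - y)
        = (S x - S y) - ((x - S x) - (y - S y)) := by module
    have h₂ : x - y = (S x - S y) + ((x - S x) - (y - S y)) := by abel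
    rw [h₁, h₂, norm_sub_sq_real, norm_add_sq_real]
    ring
  simp only [HasAveragedBound, lipschitzWith_iff_norm_sub_le, NNReal.coe_one, one_mul]
  refine forall₂_congr fun x y => ?_
  rw [← sq_le_sq₀ (norm_nonneg _) (norm_nonneg _)]
  constructor <;> intro h <;> linarith [key x y]

theorem hasAveragedBound_one_half_add_half {Q : H → H} (hQ : LipschitzWith 1 Q) :
    HasAveragedBound 1 (fun x => (1 / 2 : ℝ) • x + (1 / 2 : ℝ) • Q x) :=
  hasAveragedBound_one_iff.mpr <| by
    convert hQ using 2 with x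
    module

theorem mul_div_add_mul_norm_add_sq_le_s1 {a b : ℝ} (ha : 0 < a) (hb : 0 < b) (u v : H) :
    a * b / (a + b) * ‖u + v‖ ^ 2 ≤ a * ‖u‖ ^ 2 + b * ‖v‖ ^ 2 := by
  have key : (a + b) * (a * ‖u‖ ^ 2 + b * ‖v‖ ^ 2) - a * b * ‖u + v‖ ^ 2
      = ‖a • u - b • v‖ ^ 2 := by
    rw [norm_add_sq_real, norm_sub_sq_real, norm_smul, norm_smul, real_inner_smul_left,
      real_inner_smul_right, Real.norm_of_nonneg ha.le, Real.norm_of_nonneg hb.le]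
    ring
  rw [div_mul_eq_mul_div, div_le_iff₀ (by positivity)]
  nlinarith [sq_nonneg ‖a • u - b • v‖]

theorem HasAveragedBound.comp {θ₁ θ₂ : ℝ} {S F : H → H} (hS : HasAveragedBound θ₁ S)
    (hF : HasAveragedBound θ₂ F) (h₁ : 0 < θ₁) (h₂ : 0 < θ₂) :
    HasAveragedBound (θ₁ * θ₂ / (θ₁ + θ₂)) (S ∘ F) := by
  intro x y
  have hsplit : (x - S (F x)) - (y - S (F y))
      = ((F x - S (F x)) - (F y - S (F y))) + ((x - F x) - (y - F y)) := by abel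
  rw [Function.comp_apply, Function.comp_apply, hsplit]
  linarith [hS (F x) (F y), hF x y, mul_div_add_mul_norm_add_sq_le_s1 h₁ h₂
    ((F x - S (F x)) - (F y - S (F y))) ((x - F x) - (y - F y))]

theorem HasAveragedBound.exists_lipschitzWith_one {α : ℝ} {T : H → H} (hα : 0 < α)
    (hT : HasAveragedBound ((1 - α) / α) T) :
    ∃ N : H → H, LipschitzWith 1 N ∧ ∀ z, T z = (1 - α) • z + α • N z := by
  refine ⟨fun z => z + α⁻¹ • (T z - z), ?_, fun z => ?_⟩
  · refine lipschitzWith_iff_norm_sub_le.mpr fun x y => ?_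
    rw [NNReal.coe_one, one_mul, ← sq_le_sq₀ (norm_nonneg _) (norm_nonneg _)]
    have hxy : x + α⁻¹ • (T x - x) - (y + α⁻¹ • (T y - y))
        = (x - y) - α⁻¹ • ((x - T x) - (y - T y)) := by module
    have hTxy : T x - T y = (x - y) - ((x - T x) - (y - T y)) := by abel
    have hθ : (1 - α) / α = α⁻¹ - 1 := by field_simp
    have h := hT x y
    rw [hTxy, hθ, norm_sub_sq_real] at h
    rw [hxy, norm_sub_sq_real, norm_smul, real_inner_smul_right,
      Real.norm_of_nonneg (inv_nonneg.mpr hα.le)]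
    nlinarith [mul_le_mul_of_nonneg_left h (inv_nonneg.mpr hα.le)]
  · rw [smul_add, smul_smul, mul_inv_cancel₀ hα.ne', one_smul]
    module

theorem hasAveragedBound_sub_smul {G : H → H} {β γ : ℝ} (hγ : 0 < γ)
    (hG : ∀ x y, β * ‖G x - G y‖ ^ 2 ≤ ⟪G x - G y, x - y⟫) :
    HasAveragedBound ((2 * β - γ) / γ) (fun z => z - γ • G z) := by
  intro x y
  have h₁ : x - γ • G x - (y - γ • G y) = (x - y) - γ • (G x - G y) := by module
  have h₂ : x - (x - γ • G x) - (y - (y - γ • G y)) = γ • (G x - G y) := by module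
  rw [h₁, h₂, norm_sub_sq_real, norm_smul, real_inner_smul_right, real_inner_comm,
    Real.norm_of_nonneg hγ.le]
  have hθ : (2 * β - γ) / γ * (γ * ‖G x - G y‖) ^ 2 = (2 * β - γ) * γ * ‖G x - G y‖ ^ 2 := by
    field_simp
  nlinarith [hG x y]

theorem le_of_forall_mem_Ioc_le_add_mul {a b c : ℝ} (h : ∀ t ∈ Ioc (0 : ℝ) 1, a ≤ b + t * c) :
    a ≤ b := by
  have hlim : Tendsto (fun t : ℝ => b + t * c) (𝓝[>] 0) (𝓝 b) := by
    have : Continuous fun t : ℝ => b + t * c := by fun_prop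
    simpa using (this.tendsto 0).mono_left nhdsWithin_le_nhds
  exact ge_of_tendsto hlim (eventually_of_mem (Ioc_mem_nhdsGT one_pos) h)

theorem IsMinOn.two_mul_inner_le {f : H → ℝ} (hf : ConvexOn ℝ univ f) {c : ℝ} {x p : H}
    (hp : IsMinOn (fun y => f y + c * ‖y - x‖ ^ 2) univ p) (w : H) :
    2 * c * ⟪x - p, w - p⟫ ≤ f w - f p := by
  refine le_of_forall_mem_Ioc_le_add_mul (c := c * ‖w - p‖ ^ 2) fun t ⟨ht₀, ht₁⟩ => ?_
  have hmin := isMinOn_iff.mp hp (p + t • (w - p)) (mem_univ _)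
  have hconv : f (p + t • (w - p)) ≤ (1 - t) * f p + t * f w := by
    have h := hf.2 (mem_univ p) (mem_univ w) (sub_nonneg.mpr ht₁) ht₀.le (by ring)
    rwa [show (1 - t) • p + t • w = p + t • (w - p) by module, smul_eq_mul, smul_eq_mul] at h
  have hnorm : ‖p + t • (w - p) - x‖ ^ 2
      = ‖p - x‖ ^ 2 - 2 * t * ⟪x - p, w - p⟫ + t ^ 2 * ‖w - p‖ ^ 2 := by
    rw [show p + t • (w - p) - x = (p - x) + t • (w - p) by abel, norm_add_sq_real, norm_smul,
      real_inner_smul_right, Real.norm_eq_abs, mul_pow, sq_abs, ← neg_sub x p, inner_neg_left]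
    ring
  simp only [hnorm] at hmin
  nlinarith

theorem hasAveragedBound_one_of_isMinOn {f : H → ℝ} (hf : ConvexOn ℝ univ f) {γ : ℝ}
    (hγ : 0 < γ) {prox : H → H}
    (hprox : ∀ x, IsMinOn (fun y => f y + (1 / (2 * γ)) * ‖y - x‖ ^ 2) univ (prox x)) :
    HasAveragedBound 1 prox := by
  intro x y
  have hx := (hprox x).two_mul_inner_le hf (prox y)
  have hy := (hprox y).two_mul_inner_le hf (prox x)
  set p := prox x
  set q := prox y
  have hc : 2 * (1 / (2 * γ)) = γ⁻¹ := by field_simp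
  have hsum : ⟪x - p, q - p⟫ + ⟪y - q, p - q⟫ = -⟪(x - p) - (y - q), p - q⟫ := by
    rw [← neg_sub p q, inner_neg_right, inner_sub_left (x - p) (y - q)]
    ring
  have hmono : 0 ≤ ⟪p - q, (x - p) - (y - q)⟫ := by
    rw [hc] at hx hy
    rw [real_inner_comm]
    nlinarith [inv_pos.mpr hγ]
  rw [show x - y = (p - q) + ((x - p) - (y - q)) by abel, norm_add_sq_real]
  linarith

section Gradient

variable [CompleteSpace H]

theorem HasGradientAt.hasDerivAt_add_smul {h : H → ℝ} {g x u : H} {t : ℝ}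
    (hg : HasGradientAt h g (x + t • u)) :
    HasDerivAt (fun s : ℝ => h (x + s • u)) ⟪g, u⟫ t := by
  have hline : HasDerivAt (fun s : ℝ => x + s • u) u t := by
    simpa using ((hasDerivAt_id t).smul_const u).const_add x
  simpa [InnerProductSpace.toDual_apply_apply, Function.comp_def] using
    (hasGradientAt_iff_hasFDerivAt.mp hg).comp_hasDerivAt t hline

theorem HasGradientAt.comp_continuousLinearMap {g : H → ℝ} {g' : H} (A : H →L[ℝ] H) {x : H}
    (hg : HasGradientAt g g' (A x)) :
    HasGradientAt (fun y => g (A y)) (A.adjoint g') x := by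
  refine hasGradientAt_iff_hasFDerivAt.mpr
    (((hasGradientAt_iff_hasFDerivAt.mp hg).comp x A.hasFDerivAt).congr_fderiv ?_)
  ext v
  simp [ContinuousLinearMap.adjoint_inner_left]

theorem ConvexOn.add_inner_le_of_hasGradientAt {h : H → ℝ} (hh : ConvexOn ℝ univ h) {g x : H}
    (hg : HasGradientAt h g x) (y : H) :
    h x + ⟪g, y - x⟫ ≤ h y := by
  have hline : ConvexOn ℝ univ (fun t : ℝ => h (x + t • (y - x))) := by
    simpa [Function.comp_def, AffineMap.lineMap_apply_module', add_comm] using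
      hh.comp_affineMap (AffineMap.lineMap x y)
  have hderiv : HasDerivAt (fun t : ℝ => h (x + t • (y - x))) ⟪g, y - x⟫ 0 :=
    HasGradientAt.hasDerivAt_add_smul (by simpa using hg)
  have := hline.le_slope_of_hasDerivAt (mem_univ 0) (mem_univ 1) one_pos hderiv
  simp [slope_def_field] at this
  linarith

theorem le_add_inner_add_norm_sq_of_lipschitzWith {h : H → ℝ} {G : H → H} {K : ℝ≥0}
    (hG : ∀ z, HasGradientAt h (G z) z) (hK : LipschitzWith K G) (x y : H) :
    h y ≤ h x + ⟪G x, y - x⟫ + K / 2 * ‖y - x‖ ^ 2 := by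
  set u := y - x
  set φ : ℝ → ℝ := fun t => h (x + t • u) - t * ⟪G x, u⟫ - t ^ 2 * (K / 2 * ‖u‖ ^ 2)
  have hφ : ∀ t, HasDerivAt φ (⟪G (x + t • u) - G x, u⟫ - t * (K * ‖u‖ ^ 2)) t := by
    intro t
    refine ((((hG (x + t • u)).hasDerivAt_add_smul).sub (hasDerivAt_mul_const ⟪G x, u⟫)).sub
      ((hasDerivAt_pow 2 t).mul_const (K / 2 * ‖u‖ ^ 2))).congr_deriv ?_
    rw [inner_sub_left]
    ring
  have hanti : AntitoneOn φ (Icc 0 1) := by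
    refine antitoneOn_of_hasDerivWithinAt_nonpos (convex_Icc 0 1)
      (HasDerivAt.continuousOn fun t _ => hφ t) (fun t _ => (hφ t).hasDerivWithinAt) ?_
    intro t ht
    rw [interior_Icc] at ht
    have hlip : ‖G (x + t • u) - G x‖ ≤ K * (t * ‖u‖) := by
      simpa [norm_smul, abs_of_pos ht.1] using hK.norm_sub_le (x + t • u) x
    nlinarith [real_inner_le_norm (G (x + t • u) - G x) u,
      mul_le_mul_of_nonneg_right hlip (norm_nonneg u)]
  have h01 := hanti (left_mem_Icc.mpr zero_le_one) (right_mem_Icc.mpr zero_le_one) zero_le_one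
  simp [φ, u] at h01
  linarith

theorem ConvexOn.add_inner_add_norm_sq_le {h : H → ℝ} (hh : ConvexOn ℝ univ h) {G : H → H}
    {β : ℝ} (hβ : 0 < β) (hG : ∀ z, HasGradientAt h (G z) z)
    (hK : LipschitzWith (1 / β).toNNReal G) (a b : H) :
    h a + ⟪G a, b - a⟫ + β / 2 * ‖G b - G a‖ ^ 2 ≤ h b := by
  set d := G b - G a
  set z := b - β • d
  have hdescent := le_add_inner_add_norm_sq_of_lipschitzWith hG hK b z
  have hsupport := hh.add_inner_le_of_hasGradientAt (hG a) z
  rw [Real.coe_toNNReal _ (by positivity), show z - b = -(β • d) by simp [z],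
    inner_neg_right, real_inner_smul_right, norm_neg, norm_smul, Real.norm_of_nonneg hβ.le]
    at hdescent
  rw [show z - a = (b - a) - β • d by simp [z]; abel, inner_sub_right, real_inner_smul_right]
    at hsupport
  have hd : ⟪G b, d⟫ - ⟪G a, d⟫ = ‖d‖ ^ 2 := by
    rw [← inner_sub_left, real_inner_self_eq_norm_sq]
  have hβ' : 1 / β / 2 * (β * ‖d‖) ^ 2 = β / 2 * ‖d‖ ^ 2 := by
    field_simp
  nlinarith

/-- Baillon–Haddad. -/
theorem ConvexOn.mul_norm_sub_sq_le_inner {h : H → ℝ} (hh : ConvexOn ℝ univ h) {G : H → H}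
    {β : ℝ} (hβ : 0 < β) (hG : ∀ z, HasGradientAt h (G z) z)
    (hK : LipschitzWith (1 / β).toNNReal G) (x y : H) :
    β * ‖G x - G y‖ ^ 2 ≤ ⟪G x - G y, x - y⟫ := by
  have hxy := hh.add_inner_add_norm_sq_le hβ hG hK x y
  have hyx := hh.add_inner_add_norm_sq_le hβ hG hK y x
  rw [norm_sub_rev] at hxy
  have : ⟪G x - G y, x - y⟫ = -⟪G x, y - x⟫ - ⟪G y, x - y⟫ := by
    rw [inner_sub_left, ← neg_sub y x, inner_neg_right, inner_neg_right]
  linarith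

end Gradient

end

theorem fdrs_operator_averaged_general
    {H : Type*} [NormedAddCommGroup H] [InnerProductSpace ℝ H] [CompleteSpace H]
    (V : Submodule ℝ H) [CompleteSpace V]
    (PV : H → H) (hPV : ∀ x, PV x = (V.orthogonalProjection x : H))
    (f g : H → ℝ) (gradg gradh proxf : H → H)
    (βV γ : ℝ) (hβV : 0 < βV)
    (hγ : γ ∈ Set.Ioo (0 : ℝ) (2 * βV))
    (hfconv : ConvexOn ℝ Set.univ f)
    (hgconv : ConvexOn ℝ Set.univ g)
    (hgdiff : ∀ x, HasGradientAt g (gradg x) x)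
    (hgradh : ∀ x, gradh x = PV (gradg (PV x)))
    (hgradhlip : LipschitzWith (1 / βV).toNNReal gradh)
    (hprox : ∀ x, IsMinOn (fun y => f y + (1 / (2 * γ)) * ‖y - x‖ ^ 2) Set.univ (proxf x))
    (T : H → H)
    (hT : ∀ z, T z = (1 / 2 : ℝ) • (z - γ • gradh z)
        + (1 / 2 : ℝ) • ((2 : ℝ) • proxf ((2 : ℝ) • PV (z - γ • gradh z) - (z - γ • gradh z))
            - ((2 : ℝ) • PV (z - γ • gradh z) - (z - γ • gradh z)))) :
    ∃ N : H → H, LipschitzWith 1 N ∧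
      ∀ z, T z = (1 - 2 * βV / (4 * βV - γ)) • z + (2 * βV / (4 * βV - γ)) • N z := by
  obtain ⟨hγ₀, hγ₂⟩ := hγ
  obtain rfl : PV = V.starProjection := funext hPV
  have hh : ConvexOn ℝ univ (fun z => g (V.starProjection z)) :=
    hgconv.comp_linearMap V.starProjection.toLinearMap
  have hgrad : ∀ z, HasGradientAt (fun y => g (V.starProjection y)) (gradh z) z := fun z => by
    simpa [hgradh, (isSelfAdjoint_starProjection V).adjoint_eq] using
      (hgdiff _).comp_continuousLinearMap V.starProjection
  have hforward : HasAveragedBound ((2 * βV - γ) / γ) (fun z => z - γ • gradh z) :=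
    hasAveragedBound_sub_smul hγ₀ (hh.mul_norm_sub_sq_le_inner hβV hgrad hgradhlip)
  have hreflProx : LipschitzWith 1 (fun x => (2 : ℝ) • proxf x - x) :=
    hasAveragedBound_one_iff.mp (hasAveragedBound_one_of_isMinOn hfconv hγ₀ hprox)
  have hrefl : ∀ w, V.reflection w = (2 : ℝ) • V.starProjection w - w := fun w => by
    rw [Submodule.reflection_apply, two_nsmul, two_smul]
  have hQ : LipschitzWith 1 (fun w => (2 : ℝ) • proxf ((2 : ℝ) • V.starProjection w - w)
      - ((2 : ℝ) • V.starProjection w - w)) := by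
    simpa only [Function.comp_def, hrefl, mul_one] using hreflProx.comp V.reflection.lipschitz
  have hθ : 1 * ((2 * βV - γ) / γ) / (1 + (2 * βV - γ) / γ)
      = (1 - 2 * βV / (4 * βV - γ)) / (2 * βV / (4 * βV - γ)) := by
    rw [one_sub_div (by linarith), div_div_div_cancel_right₀ (by linarith)]
    field_simp
    ring
  obtain rfl : T = _ := funext hT
  refine HasAveragedBound.exists_lipschitzWith_one (div_pos (by linarith) (by linarith)) ?_
  rw [← hθ]
  exact (hasAveragedBound_one_half_add_half hQ).comp hforward one_pos (div_pos (by linarith) hγ₀)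

/-- If γ ∈ (0, 2β_V), then the FDRS operator T is α-averaged with
α = 2β_V/(4β_V − γ); i.e., there is a nonexpansive N with T = (1 − α)I + αN. -/
theorem fdrs_operator_averaged
    {H : Type*} [NormedAddCommGroup H] [InnerProductSpace ℝ H] [CompleteSpace H]
    (V : Submodule ℝ H) [CompleteSpace V]
    (PV : H → H) (hPV : ∀ x, PV x = (V.orthogonalProjection x : H))
    (f g : H → ℝ) (gradg gradh proxf : H → H)
    (β βV γ : ℝ) (hβ : 0 < β) (hβV : 0 < βV)
    (hγ : γ ∈ Set.Ioo (0 : ℝ) (2 * βV))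
    (hfconv : ConvexOn ℝ Set.univ f) (hfcont : Continuous f)
    (hgconv : ConvexOn ℝ Set.univ g)
    (hgdiff : ∀ x, HasGradientAt g (gradg x) x)
    (hglip : LipschitzWith (1 / β).toNNReal gradg)
    (hgradh : ∀ x, gradh x = PV (gradg (PV x)))
    (hgradhlip : LipschitzWith (1 / βV).toNNReal gradh)
    (hprox : ∀ x, IsMinOn (fun y => f y + (1 / (2 * γ)) * ‖y - x‖ ^ 2) Set.univ (proxf x))
    (T : H → H)
    (hT : ∀ z, T z = (1 / 2 : ℝ) • (z - γ • gradh z)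
        + (1 / 2 : ℝ) • ((2 : ℝ) • proxf ((2 : ℝ) • PV (z - γ • gradh z) - (z - γ • gradh z))
            - ((2 : ℝ) • PV (z - γ • gradh z) - (z - γ • gradh z)))) :
    ∃ N : H → H, LipschitzWith 1 N ∧
      ∀ z, T z = (1 - 2 * βV / (4 * βV - γ)) • z + (2 * βV / (4 * βV - γ)) • N z :=
  fdrs_operator_averaged_general V PV hPV f g gradg gradh proxf βV γ hβV hγ hfconv hgconv hgdiff
    hgradh hgradhlip hprox T hT
end

section
/- (FDRS optimality conditions.) Let γ > 0. The following set equality holds: {x ∈ V : there exist p ∈ ∂f(x) and q ∈ V⊥ with p + ∇h(x) + q = 0} = {P_V z : z ∈ H and T(z) = z}. Moreover, if z* is a fixed point of T and x* := P_V z*, then x_h(z*) = x_f(z*) = x*, and z* − x* = P_{V⊥}(z*) ∈ V⊥ with ∇̃f(x_f(z*)) + ∇h(x*) + ∇̃χ_V(x_h(z*)) = 0. -/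
open scoped RealInnerProductSpace
open Filter Topology

/-!
Since `∇h` takes values in `V` and depends only on `P_V z`, the FDRS operator collapses to
`T z = z - P_V z + prox_{γf}(r z)` with `r z = P_V z - P_{V⊥} z - γ ∇h z`, so `z` is fixed exactly
when `prox_{γf}(r z) = P_V z`. The prox optimality condition (`prox_{γf} r = x` iff
`γ⁻¹ (r - x) ∈ ∂f(x)`, uniqueness coming from monotonicity of `∂f`) turns this into
`-γ⁻¹ P_{V⊥} z - ∇h(P_V z) ∈ ∂f(P_V z)`, which is the optimality condition with
`q = γ⁻¹ P_{V⊥} z`. Conversely, a solution `(x, p, q)` yields the fixed point `x + γ q`.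
-/

noncomputable section

variable {H : Type*} [NormedAddCommGroup H] [InnerProductSpace ℝ H]

def HasSubgradientAt (f : H → ℝ) (p x : H) : Prop :=
  ∀ y, f x + ⟪y - x, p⟫ ≤ f y

theorem HasSubgradientAt.inner_sub_nonneg {f : H → ℝ} {p q x y : H}
    (hp : HasSubgradientAt f p x) (hq : HasSubgradientAt f q y) : 0 ≤ ⟪p - q, x - y⟫ := by
  have hxy := hp y
  have hyx := hq x
  have : ⟪p - q, x - y⟫ = -(⟪y - x, p⟫ + ⟪x - y, q⟫) := by
    simp only [inner_sub_left, inner_sub_right, real_inner_comm]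
    ring
  linarith

theorem ConvexOn.hasSubgradientAt_of_isMinOn_prox {f : H → ℝ} (hf : ConvexOn ℝ Set.univ f)
    {γ : ℝ} (hγ : 0 < γ) {r x : H}
    (hx : IsMinOn (fun y => f y + (1 / (2 * γ)) * ‖y - r‖ ^ 2) Set.univ x) :
    HasSubgradientAt f (γ⁻¹ • (r - x)) x := by
  intro y
  have hc : γ⁻¹ = 2 * (1 / (2 * γ)) := by field_simp
  set c := 1 / (2 * γ)
  -- compare `x` with the points `x + t • (y - x)` of the segment towards `y`, then let `t → 0⁺`
  have hseg : ∀ t ∈ Set.Ioo (0 : ℝ) 1,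
      f x ≤ f y + 2 * c * ⟪x - r, y - x⟫ + t * (c * ‖y - x‖ ^ 2) := by
    rintro t ⟨ht0, ht1⟩
    have hmin : f x + c * ‖x - r‖ ^ 2 ≤ f (x + t • (y - x)) + c * ‖x + t • (y - x) - r‖ ^ 2 :=
      hx (Set.mem_univ _)
    have hconv : f (x + t • (y - x)) ≤ (1 - t) * f x + t * f y := by
      have := hf.2 (Set.mem_univ x) (Set.mem_univ y) (sub_nonneg.mpr ht1.le) ht0.le (by ring)
      rwa [show (1 - t) • x + t • y = x + t • (y - x) by module, smul_eq_mul, smul_eq_mul] at this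
    have hnorm : ‖x + t • (y - x) - r‖ ^ 2
        = ‖x - r‖ ^ 2 + 2 * (t * ⟪x - r, y - x⟫) + t ^ 2 * ‖y - x‖ ^ 2 := by
      rw [show x + t • (y - x) - r = (x - r) + t • (y - x) by abel, norm_add_sq_real,
        real_inner_smul_right, norm_smul, mul_pow, Real.norm_eq_abs, sq_abs]
    have : t * f x ≤ t * (f y + 2 * c * ⟪x - r, y - x⟫ + t * (c * ‖y - x‖ ^ 2)) := by
      rw [hnorm] at hmin
      linarith
    exact le_of_mul_le_mul_left this ht0
  have hlim : Tendsto (fun t : ℝ => f y + 2 * c * ⟪x - r, y - x⟫ + t * (c * ‖y - x‖ ^ 2))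
      (𝓝[>] 0) (𝓝 (f y + 2 * c * ⟪x - r, y - x⟫)) := by
    refine (Continuous.tendsto' ?_ 0 _ (by simp)).mono_left nhdsWithin_le_nhds
    fun_prop
  have hle := ge_of_tendsto hlim (eventually_of_mem (Ioo_mem_nhdsGT one_pos) hseg)
  have hflip : ⟪y - x, γ⁻¹ • (r - x)⟫ = -(2 * c * ⟪x - r, y - x⟫) := by
    rw [real_inner_smul_right, real_inner_comm, hc, ← neg_sub x r, inner_neg_left]
    ring
  linarith

theorem ConvexOn.eq_iff_hasSubgradientAt_of_isMinOn_prox {f : H → ℝ}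
    (hf : ConvexOn ℝ Set.univ f) {γ : ℝ} (hγ : 0 < γ) {r u x : H}
    (hu : IsMinOn (fun y => f y + (1 / (2 * γ)) * ‖y - r‖ ^ 2) Set.univ u) :
    u = x ↔ HasSubgradientAt f (γ⁻¹ • (r - x)) x := by
  refine ⟨fun hux => hux ▸ hf.hasSubgradientAt_of_isMinOn_prox hγ hu, fun hx => ?_⟩
  have hmono := hx.inner_sub_nonneg (hf.hasSubgradientAt_of_isMinOn_prox hγ hu)
  rw [← smul_sub, sub_sub_sub_cancel_left, real_inner_smul_left, ← neg_sub x u, inner_neg_left,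
    real_inner_self_eq_norm_sq] at hmono
  have : ‖x - u‖ ^ 2 ≤ 0 := by nlinarith [inv_pos.mpr hγ]
  simpa [sub_eq_zero, eq_comm] using this

section FDRS

variable (V : Submodule ℝ H) [V.HasOrthogonalProjection] (proxf gradh : H → H) (γ : ℝ)

def fdrsReflection (z : H) : H :=
  (2 : ℝ) • V.starProjection (z - γ • gradh z) - (z - γ • gradh z)

def fdrsOperator (z : H) : H :=
  (1 / 2 : ℝ) • (z - γ • gradh z) + (1 / 2 : ℝ) •
    ((2 : ℝ) • proxf (fdrsReflection V gradh γ z) - fdrsReflection V gradh γ z)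

variable {V gradh γ}

theorem fdrsReflection_eq {z : H} (hz : gradh z ∈ V) :
    fdrsReflection V gradh γ z = V.starProjection z - (z - V.starProjection z) - γ • gradh z := by
  rw [fdrsReflection, map_sub, map_smul, Submodule.starProjection_eq_self_iff.mpr hz]
  module

theorem fdrsOperator_eq {z : H} (hz : gradh z ∈ V) :
    fdrsOperator V proxf gradh γ z
      = z + (proxf (fdrsReflection V gradh γ z) - V.starProjection z) := by
  rw [fdrsOperator, fdrsReflection_eq hz]
  module

theorem fdrsOperator_eq_self_iff {z : H} (hz : gradh z ∈ V) :
    fdrsOperator V proxf gradh γ z = z ↔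
      proxf (fdrsReflection V gradh γ z) = V.starProjection z := by
  rw [fdrsOperator_eq proxf hz, add_eq_left, sub_eq_zero]

theorem inv_smul_fdrsReflection_sub_starProjection (hγ : γ ≠ 0) {z : H} (hz : gradh z ∈ V) :
    γ⁻¹ • (fdrsReflection V gradh γ z - V.starProjection z)
      = -(γ⁻¹ • (z - V.starProjection z)) - gradh z := by
  rw [fdrsReflection_eq hz]
  simp only [smul_sub, smul_smul, inv_mul_cancel₀ hγ, one_smul]
  abel

variable {proxf}

theorem fdrsOperator_eq_self_iff_hasSubgradientAt {f : H → ℝ} (hf : ConvexOn ℝ Set.univ f)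
    (hγ : 0 < γ)
    (hprox : ∀ r, IsMinOn (fun y => f y + (1 / (2 * γ)) * ‖y - r‖ ^ 2) Set.univ (proxf r))
    (hmem : ∀ z, gradh z ∈ V) (hproj : ∀ z, gradh (V.starProjection z) = gradh z) (z : H) :
    fdrsOperator V proxf gradh γ z = z ↔
      HasSubgradientAt f (-(γ⁻¹ • (z - V.starProjection z)) - gradh (V.starProjection z))
        (V.starProjection z) := by
  rw [fdrsOperator_eq_self_iff proxf (hmem z), hf.eq_iff_hasSubgradientAt_of_isMinOn_prox hγ
    (hprox _), inv_smul_fdrsReflection_sub_starProjection hγ.ne' (hmem z), hproj]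

theorem fdrsOperator_fixed_residual_eq_zero (hγ : γ ≠ 0) (hmem : ∀ z, gradh z ∈ V)
    (hproj : ∀ z, gradh (V.starProjection z) = gradh z) {z : H}
    (hz : fdrsOperator V proxf gradh γ z = z) :
    γ⁻¹ • (fdrsReflection V gradh γ z - proxf (fdrsReflection V gradh γ z))
      + gradh (V.starProjection z) + γ⁻¹ • (z - V.starProjection z) = 0 := by
  rw [(fdrsOperator_eq_self_iff proxf (hmem z)).mp hz,
    inv_smul_fdrsReflection_sub_starProjection hγ (hmem z), hproj]
  abel

end FDRS

end

theorem fdrs_optimality_conditions_general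
    {H : Type*} [NormedAddCommGroup H] [InnerProductSpace ℝ H]
    (V : Submodule ℝ H) [CompleteSpace V]
    (PV : H → H) (hPV : ∀ x, PV x = (Submodule.orthogonalProjectionOnto V x : H))
    (f : H → ℝ) (gradg gradh proxf : H → H)
    (γ : ℝ) (hγ : 0 < γ)
    (hfconv : ConvexOn ℝ Set.univ f)
    (hgradh : ∀ x, gradh x = PV (gradg (PV x)))
    (hprox : ∀ x, IsMinOn (fun y => f y + (1 / (2 * γ)) * ‖y - x‖ ^ 2) Set.univ (proxf x))
    (T : H → H)
    (hT : ∀ z, T z = (1 / 2 : ℝ) • (z - γ • gradh z)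
        + (1 / 2 : ℝ) • ((2 : ℝ) • proxf ((2 : ℝ) • PV (z - γ • gradh z) - (z - γ • gradh z))
            - ((2 : ℝ) • PV (z - γ • gradh z) - (z - γ • gradh z)))) :
    -- the set equality
    ({x : H | x ∈ V ∧ ∃ p : H, (∀ y : H, f x + ⟪y - x, p⟫ ≤ f y) ∧
        ∃ q ∈ Vᗮ, p + gradh x + q = 0}
      = {x : H | ∃ z : H, T z = z ∧ x = PV z}) ∧
    -- moreover, for each fixed point z* of T with x* := P_V z*:
    (∀ zs : H, T zs = zs →
      PV zs = proxf ((2 : ℝ) • PV (zs - γ • gradh zs) - (zs - γ • gradh zs)) ∧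
      zs - PV zs ∈ Vᗮ ∧
      γ⁻¹ • (((2 : ℝ) • PV (zs - γ • gradh zs) - (zs - γ • gradh zs))
          - proxf ((2 : ℝ) • PV (zs - γ • gradh zs) - (zs - γ • gradh zs)))
        + gradh (PV zs) + γ⁻¹ • (zs - PV zs) = 0) := by
  obtain rfl : PV = V.starProjection := funext hPV
  obtain rfl : T = fdrsOperator V proxf gradh γ := funext hT
  have hmem : ∀ z, gradh z ∈ V := fun z => hgradh z ▸ V.starProjection_apply_mem _
  have hproj : ∀ z, gradh (V.starProjection z) = gradh z := fun z => by
    rw [hgradh, hgradh, V.starProjection_eq_self_iff.mpr (V.starProjection_apply_mem z)]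
  have hfix := fdrsOperator_eq_self_iff_hasSubgradientAt hfconv hγ hprox hmem hproj
  refine ⟨Set.ext fun x => ⟨?_, ?_⟩, fun z hz =>
    ⟨((fdrsOperator_eq_self_iff proxf (hmem z)).mp hz).symm, V.sub_starProjection_mem_orthogonal z,
      fdrsOperator_fixed_residual_eq_zero hγ.ne' hmem hproj hz⟩⟩
  · rintro ⟨hxV, p, hp, q, hqV, hpq⟩
    have hPz : V.starProjection (x + γ • q) = x := by
      rw [map_add, map_smul, V.starProjection_eq_self_iff.mpr hxV,
        (V.starProjection_apply_eq_zero_iff).mpr hqV, smul_zero, add_zero]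
    refine ⟨x + γ • q, (hfix _).mpr ?_, hPz.symm⟩
    have hp_eq : p = -q - gradh x := by rw [← sub_eq_zero, ← hpq]; abel
    rwa [hPz, add_sub_cancel_left, inv_smul_smul₀ hγ.ne', ← hp_eq]
  · rintro ⟨z, hz, rfl⟩
    exact ⟨V.starProjection_apply_mem z, _, (hfix z).mp hz, γ⁻¹ • (z - V.starProjection z),
      Vᗮ.smul_mem _ (V.sub_starProjection_mem_orthogonal z), by abel⟩

/-- the FDRS optimality conditions. -/
theorem fdrs_optimality_conditions
    {H : Type*} [NormedAddCommGroup H] [InnerProductSpace ℝ H] [CompleteSpace H]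
    (V : Submodule ℝ H) [CompleteSpace V]
    (PV : H → H) (hPV : ∀ x, PV x = (Submodule.orthogonalProjectionOnto V x : H))
    (f g : H → ℝ) (gradg gradh proxf : H → H)
    (β γ : ℝ) (hβ : 0 < β) (hγ : 0 < γ)
    (hfconv : ConvexOn ℝ Set.univ f) (hfcont : Continuous f)
    (hgconv : ConvexOn ℝ Set.univ g)
    (hgdiff : ∀ x, HasGradientAt g (gradg x) x)
    (hglip : LipschitzWith (1 / β).toNNReal gradg)
    (hgradh : ∀ x, gradh x = PV (gradg (PV x)))
    (hprox : ∀ x, IsMinOn (fun y => f y + (1 / (2 * γ)) * ‖y - x‖ ^ 2) Set.univ (proxf x))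
    (T : H → H)
    (hT : ∀ z, T z = (1 / 2 : ℝ) • (z - γ • gradh z)
        + (1 / 2 : ℝ) • ((2 : ℝ) • proxf ((2 : ℝ) • PV (z - γ • gradh z) - (z - γ • gradh z))
            - ((2 : ℝ) • PV (z - γ • gradh z) - (z - γ • gradh z)))) :
    -- the set equality
    ({x : H | x ∈ V ∧ ∃ p : H, (∀ y : H, f x + ⟪y - x, p⟫ ≤ f y) ∧
        ∃ q ∈ Vᗮ, p + gradh x + q = 0}
      = {x : H | ∃ z : H, T z = z ∧ x = PV z}) ∧
    -- moreover, for each fixed point z* of T with x* := P_V z*: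
    (∀ zs : H, T zs = zs →
      PV zs = proxf ((2 : ℝ) • PV (zs - γ • gradh zs) - (zs - γ • gradh zs)) ∧
      zs - PV zs ∈ Vᗮ ∧
      γ⁻¹ • (((2 : ℝ) • PV (zs - γ • gradh zs) - (zs - γ • gradh zs))
          - proxf ((2 : ℝ) • PV (zs - γ • gradh zs) - (zs - γ • gradh zs)))
        + gradh (PV zs) + γ⁻¹ • (zs - PV zs) = 0) :=
  fdrs_optimality_conditions_general V PV hPV f gradg gradh proxf γ hγ hfconv hgradh hprox T hT
end

section
/- Let γ > 0, let z ∈ H, let λ > 0, and set z⁺ := T_λ(z). Let z* be a fixed point of T and x* := P_V z*. Then, with x_h := P_V z and x_f := prox_{γf}(refl_{χV}(z − γ∇h(z))): 4γλ(S_f(x_f, x*) + S_h(x_h, x*)) ≤ ‖z − z*‖² − ‖z⁺ − z*‖² + (1 − 2/λ)‖z⁺ − z‖² + 2γ⟪∇h(x_h) − ∇h(x*), z − z⁺⟫. -/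
/-!
Write `R u = refl_{χV}(u - γ∇h u)`, so that `x_f = prox_{γf}(R z)`. Because `P_V ∇h = ∇h`, the
FDRS operator is `T u = u - P_V u + prox_{γf}(R u)`; hence a fixed point `z*` satisfies
`prox_{γf}(R z*) = x*`, and `z - z⁺ = λ (x_h - x_f)`.

The two prox points `x_f` and `x*` satisfy the strong prox inequality, and when `f` is smooth
the gradient at a prox point is `(R - prox)/γ`, so Baillon–Haddad cocoercivity applies as well;
both give
`2γ S_f(x_f, x*) ≤ A := ⟪(R z - x_f) - (R z* - x*), x_f - x*⟫`. Strong monotonicity of `∇g` and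
cocoercivity of `∇h` give `2 S_h(x_h, x*) ≤ ⟪∇h x_h - ∇h x*, x_h - x*⟫`. Finally, using
`⟪z - z*, P_V(z - z*)⟫ = ‖P_V(z - z*)‖²`, the right-hand side of the inequality equals exactly
`2λ (A + γ ⟪∇h x_h - ∇h x*, x_h - x*⟫)`.
-/

open scoped RealInnerProductSpace NNReal
open Set InnerProductSpace

section Gradient

variable {H : Type*} [NormedAddCommGroup H] [InnerProductSpace ℝ H] [CompleteSpace H]
  {f : H → ℝ} {G : H → H} {u x : H} {m : ℝ}

theorem HasFDerivAt.hasGradientAt_of_apply_eq {D : H →L[ℝ] ℝ} (h : HasFDerivAt f D x)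
    (hD : ∀ v, D v = ⟪u, v⟫) : HasGradientAt f u x := by
  rwa [hasGradientAt_iff_hasFDerivAt, show toDual ℝ H u = D from ContinuousLinearMap.ext
    fun v => by simp [hD]]

theorem HasGradientAt.comp_continuousLinearMap_s6 {E : Type*} [NormedAddCommGroup E]
    [InnerProductSpace ℝ E] [CompleteSpace E] {g : H → ℝ} {A : E →L[ℝ] H} {x : E}
    (hg : HasGradientAt g u (A x)) : HasGradientAt (g ∘ A) (A.adjoint u) x :=
  (hg.hasFDerivAt.comp x A.hasFDerivAt).hasGradientAt_of_apply_eq fun v => by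
    simp [ContinuousLinearMap.adjoint_inner_left]

theorem ConvexOn.add_inner_le (hf : ConvexOn ℝ univ f) (hx : HasGradientAt f u x) (y : H) :
    f x + ⟪u, y - x⟫ ≤ f y := by
  let line : ℝ →ᵃ[ℝ] H := AffineMap.lineMap x y
  have hderiv : HasDerivAt (f ∘ line) ⟪u, y - x⟫ 0 :=
    hx.hasFDerivAt.comp_hasDerivAt_of_eq 0 AffineMap.hasDerivAt_lineMap (by simp [line])
  have := (hf.comp_affineMap line).le_slope_of_hasDerivAt (mem_univ 0) (mem_univ 1) one_pos hderiv
  simp only [slope_def_field, Function.comp_apply, AffineMap.lineMap_apply_one,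
    AffineMap.lineMap_apply_zero, sub_zero, div_one, line] at this
  linarith

theorem StrongConvexOn.add_inner_add_le (hf : StrongConvexOn univ m f) (hx : HasGradientAt f u x)
    (y : H) : f x + ⟪u, y - x⟫ + m / 2 * ‖y - x‖ ^ 2 ≤ f y := by
  have hgrad : HasGradientAt (fun y => f y - m / 2 * ‖y‖ ^ 2) (u - m • x) x :=
    (hx.hasFDerivAt.sub ((hasStrictFDerivAt_norm_sq x).hasFDerivAt.const_mul (m / 2))
      ).hasGradientAt_of_apply_eq fun v => by
        simp only [sub_apply, toDual_apply_apply, smul_apply, coe_innerSL_apply, nsmul_eq_mul,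
          Nat.cast_ofNat, smul_eq_mul, inner_sub_left, real_inner_smul_left]
        ring
  have hconv := (strongConvexOn_iff_convex.1 hf).add_inner_le hgrad y
  have hsq : ‖y‖ ^ 2 = ‖x‖ ^ 2 + 2 * ⟪x, y - x⟫ + ‖y - x‖ ^ 2 := by
    rw [← norm_add_sq_real, add_sub_cancel]
  rw [inner_sub_left, real_inner_smul_left, hsq] at hconv
  linarith

theorem StrongConvexOn.mul_norm_sub_sq_le_inner (hf : StrongConvexOn univ m f)
    (hG : ∀ x, HasGradientAt f (G x) x) (x y : H) :
    m * ‖x - y‖ ^ 2 ≤ ⟪G x - G y, x - y⟫ := by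
  have hxy := hf.add_inner_add_le (hG x) y
  have hyx := hf.add_inner_add_le (hG y) x
  rw [← neg_sub x y, inner_neg_right, norm_neg] at hxy
  rw [inner_sub_left]
  linarith

theorem le_add_inner_add_of_lipschitzWith {L : ℝ≥0} (hG : ∀ x, HasGradientAt f (G x) x)
    (hL : LipschitzWith L G) (x y : H) :
    f y ≤ f x + ⟪G x, y - x⟫ + L / 2 * ‖y - x‖ ^ 2 := by
  set d := y - x
  let φ : ℝ → ℝ := fun t => f (AffineMap.lineMap x y t) - t * ⟪G x, d⟫ - L / 2 * t ^ 2 * ‖d‖ ^ 2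
  have hφ : ∀ t,
      HasDerivAt φ (⟪G (AffineMap.lineMap x y t), d⟫ - ⟪G x, d⟫ - L * t * ‖d‖ ^ 2) t := by
    intro t
    have h := (((hG _).hasFDerivAt.comp_hasDerivAt t
      (AffineMap.hasDerivAt_lineMap (a := x) (b := y))).sub
      ((hasDerivAt_id t).mul_const ⟪G x, d⟫)).sub
      (((hasDerivAt_pow 2 t).const_mul (L / 2 : ℝ)).mul_const (‖d‖ ^ 2))
    exact h.congr_deriv (by simp only [toDual_apply_apply, d]; ring)
  have hanti : AntitoneOn φ (Icc 0 1) := by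
    refine antitoneOn_of_hasDerivWithinAt_nonpos (convex_Icc 0 1)
      (fun t _ => (hφ t).continuousAt.continuousWithinAt) (fun t _ => (hφ t).hasDerivWithinAt) ?_
    intro t ht
    rw [interior_Icc] at ht
    have hlip : ‖G (AffineMap.lineMap x y t) - G x‖ ≤ L * (t * ‖d‖) := by
      simpa [AffineMap.lineMap_apply, norm_smul, abs_of_pos ht.1]
        using hL.norm_sub_le (AffineMap.lineMap x y t) x
    have hcs := real_inner_le_norm (G (AffineMap.lineMap x y t) - G x) d
    rw [inner_sub_left] at hcs
    nlinarith [norm_nonneg d]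
  have h01 := hanti (left_mem_Icc.2 zero_le_one) (right_mem_Icc.2 zero_le_one) zero_le_one
  simp only [AffineMap.lineMap_apply_one, AffineMap.lineMap_apply_zero, φ] at h01
  linarith

theorem ConvexOn.add_inner_add_norm_sq_div_le {L : ℝ≥0} (hf : ConvexOn ℝ univ f)
    (hG : ∀ x, HasGradientAt f (G x) x) (hL : LipschitzWith L G) (x y : H) :
    f x + ⟪G x, y - x⟫ + ‖G y - G x‖ ^ 2 / (2 * L) ≤ f y := by
  let φ : H → ℝ := fun w => f w - ⟪G x, w⟫
  have hφ : ∀ w, HasGradientAt φ (G w - G x) w := fun w =>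
    ((hG w).hasFDerivAt.sub (toDual ℝ H (G x)).hasFDerivAt).hasGradientAt_of_apply_eq
      fun v => by simp [inner_sub_left]
  have hφL : LipschitzWith L fun w => G w - G x :=
    LipschitzWith.of_dist_le_mul fun a b => by simpa only [dist_sub_right] using hL.dist_le_mul a b
  set D := G y - G x
  -- `φ` is minimised at `x`, and the gradient step from `y` already lowers it by `‖D‖² / (2L)`
  have hdesc := le_add_inner_add_of_lipschitzWith hφ hφL y (y - (L : ℝ)⁻¹ • D)
  have hmin := hf.add_inner_le (hG x) (y - (L : ℝ)⁻¹ • D)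
  simp only [sub_sub_cancel_left, inner_neg_right, norm_neg, real_inner_smul_right, norm_smul,
    norm_inv, NNReal.norm_eq, φ, inner_sub_right] at hdesc hmin
  rw [real_inner_self_eq_norm_sq] at hdesc
  have hL2 : (L : ℝ) / 2 * ((L : ℝ)⁻¹ * ‖D‖) ^ 2 = (L : ℝ)⁻¹ * ‖D‖ ^ 2 / 2 := by
    rcases eq_or_ne (L : ℝ) 0 with h | h
    · simp [h]
    · field_simp
  rw [inner_sub_right, div_eq_inv_mul, mul_inv]
  linarith

theorem ConvexOn.norm_sq_div_le_inner {L : ℝ≥0} (hf : ConvexOn ℝ univ f)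
    (hG : ∀ x, HasGradientAt f (G x) x) (hL : LipschitzWith L G) (x y : H) :
    ‖G x - G y‖ ^ 2 / L ≤ ⟪G x - G y, x - y⟫ := by
  have hxy := hf.add_inner_add_norm_sq_div_le hG hL x y
  have hyx := hf.add_inner_add_norm_sq_div_le hG hL y x
  rw [← neg_sub x y, inner_neg_right, norm_sub_rev] at hxy
  rw [inner_sub_left, show ‖G x - G y‖ ^ 2 / L = 2 * (‖G x - G y‖ ^ 2 / (2 * L)) by ring]
  linarith

theorem ConvexOn.mul_norm_sq_le_inner {β : ℝ} (hβ : 0 < β) (hf : ConvexOn ℝ univ f)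
    (hG : ∀ x, HasGradientAt f (G x) x) (hL : LipschitzWith (1 / β).toNNReal G) (x y : H) :
    β * ‖G x - G y‖ ^ 2 ≤ ⟪G x - G y, x - y⟫ := by
  have h := hf.norm_sq_div_le_inner hG hL x y
  rwa [Real.coe_toNNReal _ (one_div_pos.2 hβ).le, div_div_eq_mul_div, div_one, mul_comm] at h

end Gradient

section Prox

variable {H : Type*} [NormedAddCommGroup H] [InnerProductSpace ℝ H]
  {f : H → ℝ} {m γ : ℝ} {x p x₁ x₂ p₁ p₂ : H}

theorem StrongConvexOn.add_norm_sub_sq_le_of_isMinOn (hf : StrongConvexOn univ m f)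
    (hp : IsMinOn f univ p) (y : H) : f p + m / 2 * ‖y - p‖ ^ 2 ≤ f y := by
  have hbound : ∀ t ∈ Ioo (0 : ℝ) 1, (1 - t) * (m / 2 * ‖y - p‖ ^ 2) ≤ f y - f p := by
    intro t ⟨ht0, ht1⟩
    have hconv := hf.2 (mem_univ y) (mem_univ p) ht0.le (sub_nonneg.2 ht1.le) (add_sub_cancel t 1)
    have hmin := hp (mem_univ (t • y + (1 - t) • p))
    simp only [smul_eq_mul, mem_ofPred_eq] at hconv hmin
    nlinarith
  have hlim : Filter.Tendsto (fun t : ℝ => (1 - t) * (m / 2 * ‖y - p‖ ^ 2))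
      (nhdsWithin 0 (Ioi 0)) (nhds (m / 2 * ‖y - p‖ ^ 2)) := by
    refine (Continuous.tendsto' ?_ 0 _ (by simp)).mono_left nhdsWithin_le_nhds
    fun_prop
  have := le_of_tendsto hlim (Filter.eventually_of_mem (Ioo_mem_nhdsGT one_pos) hbound)
  linarith

theorem strongConvexOn_mul_norm_sub_sq (c : ℝ) (x : H) :
    StrongConvexOn univ (2 * c) fun y => c * ‖y - x‖ ^ 2 := by
  rw [strongConvexOn_iff_convex]
  have hconv : ConvexOn ℝ univ fun y => c * ‖x‖ ^ 2 + (-(2 * c) • innerₛₗ ℝ x) y :=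
    (convexOn_const _ convex_univ).add (LinearMap.convexOn _ convex_univ)
  refine hconv.congr fun y _ => ?_
  simp only [LinearMap.smul_apply, innerₛₗ_apply_apply, smul_eq_mul, norm_sub_sq_real,
    real_inner_comm x y]
  ring

theorem StrongConvexOn.add_mul_norm_sub_sq (hf : StrongConvexOn univ m f) (c : ℝ) (x : H) :
    StrongConvexOn univ (m + 2 * c) fun y => f y + c * ‖y - x‖ ^ 2 :=
  (UniformConvexOn.add hf (strongConvexOn_mul_norm_sub_sq c x)).mono fun r =>
    le_of_eq (by simp only [Pi.add_apply]; ring)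

/-- `p = prox_{γf}(x)`. -/
def IsProxPoint (γ : ℝ) (f : H → ℝ) (x p : H) : Prop :=
  IsMinOn (fun y => f y + 1 / (2 * γ) * ‖y - x‖ ^ 2) univ p

theorem IsProxPoint.add_sq_le (hp : IsProxPoint γ f x p) (hf : StrongConvexOn univ m f) (y : H) :
    f p + m / 2 * ‖y - p‖ ^ 2 ≤ f y + γ⁻¹ * ⟪p - x, y - p⟫ := by
  have h := (hf.add_mul_norm_sub_sq (1 / (2 * γ)) x).add_norm_sub_sq_le_of_isMinOn hp y
  have hsq : ‖y - x‖ ^ 2 = ‖p - x‖ ^ 2 + 2 * ⟪p - x, y - p⟫ + ‖y - p‖ ^ 2 := by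
    rw [← norm_add_sq_real, sub_add_sub_cancel']
  rw [hsq] at h
  have hγ : 2 * (1 / (2 * γ)) = γ⁻¹ := by ring
  nlinarith

theorem IsProxPoint.mul_norm_sub_sq_le_inner (hp₁ : IsProxPoint γ f x₁ p₁)
    (hp₂ : IsProxPoint γ f x₂ p₂) (hf : StrongConvexOn univ m f) :
    m * ‖p₁ - p₂‖ ^ 2 ≤ γ⁻¹ * ⟪(x₁ - p₁) - (x₂ - p₂), p₁ - p₂⟫ := by
  have h₁ := hp₁.add_sq_le hf p₂
  have h₂ := hp₂.add_sq_le hf p₁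
  rw [norm_sub_rev, ← neg_sub p₁ p₂, ← neg_sub x₁ p₁, inner_neg_left, inner_neg_right,
    neg_neg] at h₁
  rw [← neg_sub x₂ p₂, inner_neg_left] at h₂
  rw [inner_sub_left]
  linarith

variable [CompleteSpace H] {G : H → H}

theorem IsProxPoint.gradient_eq {u : H} (hp : IsProxPoint γ f x p) (hu : HasGradientAt f u p) :
    u = γ⁻¹ • (x - p) := by
  have hgrad : HasFDerivAt (fun y => f y + 1 / (2 * γ) * ‖y - x‖ ^ 2)
      (toDual ℝ H (u - γ⁻¹ • (x - p))) p := by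
    refine (hu.hasFDerivAt.add (((hasStrictFDerivAt_norm_sq (p - x)).hasFDerivAt.comp p
      ((hasFDerivAt_id p).sub_const x)).const_mul _)).congr_fderiv ?_
    ext v
    simp only [map_sub, ContinuousLinearMap.comp_id, add_apply, toDual_apply_apply, smul_apply,
      sub_apply, coe_innerSL_apply, nsmul_eq_mul, Nat.cast_ofNat, smul_eq_mul, map_smul]
    ring
  have := (hp.isLocalMin Filter.univ_mem).hasFDerivAt_eq_zero hgrad
  rwa [LinearIsometryEquiv.map_eq_zero_iff, sub_eq_zero] at this

theorem IsProxPoint.inner_gradient_sub_eq (hp₁ : IsProxPoint γ f x₁ p₁)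
    (hp₂ : IsProxPoint γ f x₂ p₂) (hG₁ : HasGradientAt f (G p₁) p₁)
    (hG₂ : HasGradientAt f (G p₂) p₂) :
    ⟪G p₁ - G p₂, p₁ - p₂⟫ = γ⁻¹ * ⟪(x₁ - p₁) - (x₂ - p₂), p₁ - p₂⟫ := by
  rw [hp₁.gradient_eq hG₁, hp₂.gradient_eq hG₂, ← smul_sub, real_inner_smul_left]

theorem IsProxPoint.two_mul_ite_max_le_inner {μ β : ℝ} (hγ : 0 < γ)
    (hp₁ : IsProxPoint γ f x₁ p₁) (hp₂ : IsProxPoint γ f x₂ p₂) (hf : ConvexOn ℝ univ f)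
    (hfs : StrongConvexOn univ μ f) (hG : 0 < β → ∀ x, HasGradientAt f (G x) x)
    (hL : 0 < β → LipschitzWith (1 / β).toNNReal G) :
    2 * γ * (if 0 < β then max (μ / 2 * ‖p₁ - p₂‖ ^ 2) (β / 2 * ‖G p₁ - G p₂‖ ^ 2)
      else μ / 2 * ‖p₁ - p₂‖ ^ 2) ≤ ⟪(x₁ - p₁) - (x₂ - p₂), p₁ - p₂⟫ := by
  have hμ := (le_inv_mul_iff₀ hγ).1 (hp₁.mul_norm_sub_sq_le_inner hp₂ hfs)
  split_ifs with hβ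
  · have hcoco := hf.mul_norm_sq_le_inner hβ (hG hβ) (hL hβ) p₁ p₂
    rw [hp₁.inner_gradient_sub_eq hp₂ (hG hβ p₁) (hG hβ p₂)] at hcoco
    have hβ' := (le_inv_mul_iff₀ hγ).1 hcoco
    rw [mul_max_of_nonneg _ _ (by positivity)]
    exact max_le (by linarith) (by linarith)
  · linarith

end Prox

section FDRS

variable {H : Type*} [NormedAddCommGroup H] [InnerProductSpace ℝ H]
  {V : Submodule ℝ H} [V.HasOrthogonalProjection] {γ : ℝ} {gradh : H → H}

theorem starProjection_starProjection (w : H) :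
    V.starProjection (V.starProjection w) = V.starProjection w :=
  V.starProjection_eq_self_iff.2 (V.starProjection_apply_mem w)

theorem real_inner_starProjection_right_eq_norm_sq (w : H) :
    ⟪w, V.starProjection w⟫ = ‖V.starProjection w‖ ^ 2 := by
  rw [← real_inner_self_eq_norm_sq, V.inner_starProjection_left_eq_right,
    starProjection_starProjection]

theorem two_mul_max_le_inner_of_gradient_comp_starProjection [CompleteSpace H] {g : H → ℝ}
    {gradg : H → H} {μ β : ℝ} (hβ : 0 < β) (hg : ConvexOn ℝ univ g)
    (hgs : StrongConvexOn univ μ g) (hgradg : ∀ x, HasGradientAt g (gradg x) x)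
    (hgradh : ∀ x, gradh x = V.starProjection (gradg (V.starProjection x)))
    (hL : LipschitzWith (1 / β).toNNReal gradh) (x y : H) :
    2 * max (μ / 2 * ‖V.starProjection x - V.starProjection y‖ ^ 2)
      (β / 2 * ‖gradh x - gradh y‖ ^ 2) ≤ ⟪gradh x - gradh y, x - y⟫ := by
  have hinner : ⟪gradh x - gradh y, x - y⟫
      = ⟪gradg (V.starProjection x) - gradg (V.starProjection y),
        V.starProjection x - V.starProjection y⟫ := by
    rw [hgradh, hgradh, ← map_sub, ← map_sub, V.inner_starProjection_left_eq_right]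
  have hh : ∀ x, HasGradientAt (g ∘ V.starProjection) (gradh x) x := fun x => by
    have := (hgradg (V.starProjection x)).comp_continuousLinearMap_s6 (A := V.starProjection)
    rwa [(isSelfAdjoint_starProjection V).adjoint_eq, ← hgradh] at this
  have hμ := hgs.mul_norm_sub_sq_le_inner hgradg (V.starProjection x) (V.starProjection y)
  have hβ' := (hg.comp_linearMap V.starProjection.toLinearMap).mul_norm_sq_le_inner hβ hh hL x y
  rw [mul_max_of_nonneg _ _ zero_le_two]
  exact max_le (by linarith) (by linarith)

variable (V) in
/-- `refl_{χV}(z - γ∇h(z))`. -/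
noncomputable def fdrsReflect (gradh : H → H) (γ : ℝ) (z : H) : H :=
  (2 : ℝ) • V.starProjection (z - γ • gradh z) - (z - γ • gradh z)

theorem fdrsReflect_eq (hgradh : ∀ x, V.starProjection (gradh x) = gradh x) (z : H) :
    fdrsReflect V gradh γ z = (2 : ℝ) • V.starProjection z - z - γ • gradh z := by
  rw [fdrsReflect, map_sub, map_smul, hgradh]
  module

theorem fdrs_apply {proxf T : H → H} (hgradh : ∀ x, V.starProjection (gradh x) = gradh x)
    (hT : ∀ z, T z = (1 / 2 : ℝ) • (z - γ • gradh z)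
      + (1 / 2 : ℝ) • ((2 : ℝ) • proxf (fdrsReflect V gradh γ z) - fdrsReflect V gradh γ z))
    (z : H) : T z = z - V.starProjection z + proxf (fdrsReflect V gradh γ z) := by
  rw [hT, fdrsReflect_eq hgradh]
  module

theorem fdrs_prox_eq_of_isFixedPt {proxf T : H → H} {zs : H}
    (hgradh : ∀ x, V.starProjection (gradh x) = gradh x)
    (hT : ∀ z, T z = (1 / 2 : ℝ) • (z - γ • gradh z)
      + (1 / 2 : ℝ) • ((2 : ℝ) • proxf (fdrsReflect V gradh γ z) - fdrsReflect V gradh γ z))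
    (hzs : Function.IsFixedPt T zs) : proxf (fdrsReflect V gradh γ zs) = V.starProjection zs := by
  have h := fdrs_apply hgradh hT zs
  rw [hzs] at h
  linear_combination (norm := module) -h

omit [V.HasOrthogonalProjection] in
theorem fundamental_inequality_rhs_eq {z zp zs xh xs xf d : H} {lam : ℝ} (hlam : lam ≠ 0)
    (hstep : z - zp = lam • (xh - xf)) (hproj : ⟪z - zs, xh - xs⟫ = ‖xh - xs‖ ^ 2) :
    ‖z - zs‖ ^ 2 - ‖zp - zs‖ ^ 2 + (1 - 2 / lam) * ‖zp - z‖ ^ 2 + 2 * γ * ⟪d, z - zp⟫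
      = 2 * lam * (⟪(xh - xs) + (xh - xf) - (z - zs) - γ • d, xf - xs⟫ + γ * ⟪d, xh - xs⟫) := by
  have e₁ : zp - zs = (z - zs) - lam • (xh - xf) := by rw [← hstep]; abel
  have e₂ : zp - z = -(lam • (xh - xf)) := by rw [← hstep]; abel
  have e₃ : xf - xs = (xh - xs) - (xh - xf) := by abel
  rw [e₁, e₂, e₃, hstep]
  generalize z - zs = w, xh - xs = p, xh - xf = q at *
  simp only [norm_sub_sq_real, norm_neg, norm_smul, inner_add_left, inner_sub_left,
    inner_sub_right, real_inner_smul_left, real_inner_smul_right, real_inner_self_eq_norm_sq,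
    real_inner_comm p q, Real.norm_eq_abs, mul_pow, sq_abs, hproj]
  field_simp
  ring

end FDRS

theorem fdrs_strong_convexity_fundamental_inequality_general
    {H : Type*} [NormedAddCommGroup H] [InnerProductSpace ℝ H] [CompleteSpace H]
    (V : Submodule ℝ H) [CompleteSpace V]
    (PV : H → H) (hPV : ∀ x, PV x = (V.orthogonalProjectionOnto x : H))
    (f g : H → ℝ) (gradg gradh gradf proxf : H → H)
    (βV γ : ℝ) (hβV : 0 < βV) (hγ : 0 < γ)
    (hfconv : ConvexOn ℝ Set.univ f)
    (hgconv : ConvexOn ℝ Set.univ g)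
    (hgdiff : ∀ x, HasGradientAt g (gradg x) x)
    (hgradh : ∀ x, gradh x = PV (gradg (PV x)))
    (hgradhlip : LipschitzWith (1 / βV).toNNReal gradh)
    (hprox : ∀ x, IsMinOn (fun y => f y + (1 / (2 * γ)) * ‖y - x‖ ^ 2) Set.univ (proxf x))
    (T : H → H)
    (hT : ∀ z, T z = (1 / 2 : ℝ) • (z - γ • gradh z)
        + (1 / 2 : ℝ) • ((2 : ℝ) • proxf ((2 : ℝ) • PV (z - γ • gradh z) - (z - γ • gradh z))
            - ((2 : ℝ) • PV (z - γ • gradh z) - (z - γ • gradh z))))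
    -- strong convexity / smoothness constants
    (μf μg βf : ℝ)
    (hfstrong : StrongConvexOn Set.univ μf f)
    (hgstrong : StrongConvexOn Set.univ μg g)
    (hfgrad : 0 < βf → ∀ x, HasGradientAt f (gradf x) x)
    (hfgradlip : 0 < βf → LipschitzWith (1 / βf).toNNReal gradf)
    (Sf Sh : H → H → ℝ)
    (hSf : ∀ x y, Sf x y = if 0 < βf then
        max (μf / 2 * ‖x - y‖ ^ 2) (βf / 2 * ‖gradf x - gradf y‖ ^ 2)
      else μf / 2 * ‖x - y‖ ^ 2)
    (hSh : ∀ x y, Sh x y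
        = max (μg / 2 * ‖PV x - PV y‖ ^ 2) (βV / 2 * ‖gradh x - gradh y‖ ^ 2))
    -- z, λ, z⁺, the fixed point z*, and the associated points
    (z zp xh xf zs xs : H) (lam : ℝ) (hlam : 0 < lam)
    (hzp : zp = (1 - lam) • z + lam • T z)
    (hzs : T zs = zs) (hxs : xs = PV zs)
    (hxh : xh = PV z)
    (hxf : xf = proxf ((2 : ℝ) • PV (z - γ • gradh z) - (z - γ • gradh z))) :
    4 * γ * lam * (Sf xf xs + Sh xh xs)
      ≤ ‖z - zs‖ ^ 2 - ‖zp - zs‖ ^ 2 + (1 - 2 / lam) * ‖zp - z‖ ^ 2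
        + 2 * γ * ⟪gradh xh - gradh xs, z - zp⟫ := by
  obtain rfl : PV = V.starProjection := funext hPV
  have hPgrad : ∀ x, V.starProjection (gradh x) = gradh x := fun x => by
    rw [hgradh, starProjection_starProjection]
  have hgradhP : ∀ x, gradh (V.starProjection x) = gradh x := fun x => by
    rw [hgradh, hgradh, starProjection_starProjection]
  have hfix := hxs ▸ fdrs_prox_eq_of_isFixedPt hPgrad hT hzs
  have hstep : z - zp = lam • (xh - xf) := by
    rw [hzp, fdrs_apply hPgrad hT, fdrsReflect, ← hxf, ← hxh]; module
  have hproj : ⟪z - zs, xh - xs⟫ = ‖xh - xs‖ ^ 2 := by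
    rw [hxh, hxs, ← map_sub, real_inner_starProjection_right_eq_norm_sq]
  have hres : (fdrsReflect V gradh γ z - xf) - (fdrsReflect V gradh γ zs - xs)
      = (xh - xs) + (xh - xf) - (z - zs) - γ • (gradh xh - gradh xs) := by
    rw [fdrsReflect_eq hPgrad, fdrsReflect_eq hPgrad, hxh, hxs, hgradhP, hgradhP]; module
  have hxf' : IsProxPoint γ f (fdrsReflect V gradh γ z) xf := hxf ▸ hprox _
  have hSf' := hxf'.two_mul_ite_max_le_inner hγ (hfix ▸ hprox _) hfconv hfstrong hfgrad hfgradlip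
  have hSh' := two_mul_max_le_inner_of_gradient_comp_starProjection hβV hgconv hgstrong hgdiff
    hgradh hgradhlip xh xs
  rw [← hSf, hres] at hSf'
  rw [← hSh] at hSh'
  rw [fundamental_inequality_rhs_eq hlam.ne' hstep hproj]
  linarith [mul_le_mul_of_nonneg_left hSf' hlam.le,
    mul_le_mul_of_nonneg_left hSh' (mul_nonneg hγ.le hlam.le)]

/-- the strong-convexity fundamental inequality. -/
theorem fdrs_strong_convexity_fundamental_inequality
    {H : Type*} [NormedAddCommGroup H] [InnerProductSpace ℝ H] [CompleteSpace H]
    (V : Submodule ℝ H) [CompleteSpace V]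
    (PV : H → H) (hPV : ∀ x, PV x = (V.orthogonalProjectionOnto x : H))
    (f g : H → ℝ) (gradg gradh gradf proxf : H → H)
    (β βV γ : ℝ) (hβ : 0 < β) (hβV : 0 < βV) (hγ : 0 < γ)
    (hfconv : ConvexOn ℝ Set.univ f) (hfcont : Continuous f)
    (hgconv : ConvexOn ℝ Set.univ g)
    (hgdiff : ∀ x, HasGradientAt g (gradg x) x)
    (hglip : LipschitzWith (1 / β).toNNReal gradg)
    (hgradh : ∀ x, gradh x = PV (gradg (PV x)))
    (hgradhlip : LipschitzWith (1 / βV).toNNReal gradh)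
    (hprox : ∀ x, IsMinOn (fun y => f y + (1 / (2 * γ)) * ‖y - x‖ ^ 2) Set.univ (proxf x))
    (T : H → H)
    (hT : ∀ z, T z = (1 / 2 : ℝ) • (z - γ • gradh z)
        + (1 / 2 : ℝ) • ((2 : ℝ) • proxf ((2 : ℝ) • PV (z - γ • gradh z) - (z - γ • gradh z))
            - ((2 : ℝ) • PV (z - γ • gradh z) - (z - γ • gradh z))))
    -- strong convexity / smoothness constants
    (μf μg βf : ℝ) (hμf : 0 ≤ μf) (hμg : 0 ≤ μg) (hβf : 0 ≤ βf)
    (hfstrong : StrongConvexOn Set.univ μf f)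
    (hgstrong : StrongConvexOn Set.univ μg g)
    (hfgrad : 0 < βf → ∀ x, HasGradientAt f (gradf x) x)
    (hfgradlip : 0 < βf → LipschitzWith (1 / βf).toNNReal gradf)
    (Sf Sh : H → H → ℝ)
    (hSf : ∀ x y, Sf x y = if 0 < βf then
        max (μf / 2 * ‖x - y‖ ^ 2) (βf / 2 * ‖gradf x - gradf y‖ ^ 2)
      else μf / 2 * ‖x - y‖ ^ 2)
    (hSh : ∀ x y, Sh x y
        = max (μg / 2 * ‖PV x - PV y‖ ^ 2) (βV / 2 * ‖gradh x - gradh y‖ ^ 2))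
    -- z, λ, z⁺, the fixed point z*, and the associated points
    (z zp xh xf zs xs : H) (lam : ℝ) (hlam : 0 < lam)
    (hzp : zp = (1 - lam) • z + lam • T z)
    (hzs : T zs = zs) (hxs : xs = PV zs)
    (hxh : xh = PV z)
    (hxf : xf = proxf ((2 : ℝ) • PV (z - γ • gradh z) - (z - γ • gradh z))) :
    4 * γ * lam * (Sf xf xs + Sh xh xs)
      ≤ ‖z - zs‖ ^ 2 - ‖zp - zs‖ ^ 2 + (1 - 2 / lam) * ‖zp - z‖ ^ 2
        + 2 * γ * ⟪gradh xh - gradh xs, z - zp⟫ :=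
  fdrs_strong_convexity_fundamental_inequality_general V PV hPV f g gradg gradh gradf proxf βV γ hβV
    hγ hfconv hgconv hgdiff hgradh hgradhlip hprox T hT μf μg βf hfstrong hgstrong hfgrad hfgradlip
    Sf Sh hSf hSh z zp xh xf zs xs lam hlam hzp hzs hxs hxh hxf
end

section
/- (FDRS is a primal-dual algorithm.) Let γ > 0 and set τ := 1/γ. Suppose the FDRS iterates are generated with λ_k ≡ 1, i.e., z^{k+1} = T(z^k), and for all k ≥ 0 define y^k := −(1/γ)P_{V⊥}(z^k). Then for all k ≥ 0 the following recursion holds: y^{k+1} = P_{V⊥}(y^k − τ x_f^k) and x_f^{k+1} = prox_{γf}(x_f^k − γ∇h(x_f^k) + γ(2y^{k+1} − y^k)). -/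
/-!
Since `∇h` takes values in `V`, moving `z` to `z - γ ∇h z` does not change its `V⊥`-component,
and the FDRS operator collapses to `T z = x_f + P_{V⊥} z`. Hence `P_V z^{k+1} = P_V x_f^k`,
so `∇h z^{k+1} = ∇h x_f^k` (as `∇h` factors through `P_V`), and both recursions follow by expanding
`y^k = -(1/γ) P_{V⊥} z^k`.
-/

section IdempotentLinearMap

variable {𝕜 M : Type*} [Field 𝕜] [AddCommGroup M] [Module 𝕜 M] {P : M →ₗ[𝕜] M}

theorem IsIdempotentElem.apply_apply (hP : IsIdempotentElem P) (z : M) : P (P z) = P z :=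
  LinearMap.congr_fun hP z

theorem IsIdempotentElem.apply_add_sub_apply (hP : IsIdempotentElem P) (x z : M) :
    P (x + (z - P z)) = P x := by
  rw [map_add, map_sub, hP.apply_apply, sub_self, add_zero]

theorem fdrs_step_eq [CharZero 𝕜] (γ : 𝕜) {v : M} (hv : P v = v) (x z : M) :
    (1 / 2 : 𝕜) • (z - γ • v) + (1 / 2 : 𝕜) • ((2 : 𝕜) • x - ((2 : 𝕜) • P (z - γ • v) - (z - γ • v)))
      = x + (z - P z) := by
  rw [map_sub, map_smul, hv]
  module

variable {γ : 𝕜} {x z z' y y' : M}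

theorem fdrs_dual_update (hP : IsIdempotentElem P) (hz' : z' = x + (z - P z))
    (hy : y = -(γ⁻¹ • (z - P z))) (hy' : y' = -(γ⁻¹ • (z' - P z'))) :
    y' = (y - γ⁻¹ • x) - P (y - γ⁻¹ • x) := by
  subst hz' hy hy'
  rw [hP.apply_add_sub_apply]
  simp only [map_sub, map_neg, map_smul, hP.apply_apply]
  module

theorem fdrs_primal_update (hP : IsIdempotentElem P) (hγ : γ ≠ 0) {v : M} (hv : P v = v)
    (hz' : z' = x + (z - P z)) (hy : y = -(γ⁻¹ • (z - P z)))
    (hy' : y' = -(γ⁻¹ • (z' - P z'))) :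
    (2 : 𝕜) • P (z' - γ • v) - (z' - γ • v) = x - γ • v + γ • ((2 : 𝕜) • y' - y) := by
  subst hz' hy hy'
  rw [map_sub P (x + (z - P z)), hP.apply_add_sub_apply, map_smul, hv]
  match_scalars <;> field_simp <;> ring

end IdempotentLinearMap

theorem fdrs_is_primal_dual_general
    {H : Type*} [NormedAddCommGroup H] [InnerProductSpace ℝ H]
    (V : Submodule ℝ H) [CompleteSpace V]
    (PV : H → H) (hPV : ∀ x, PV x = (V.orthogonalProjectionOnto x : H))
    (gradg gradh proxf : H → H)
    (γ τ : ℝ) (hγ : 0 < γ) (hτ : τ = 1 / γ)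
    (hgradh : ∀ x, gradh x = PV (gradg (PV x)))
    (T : H → H)
    (hT : ∀ z, T z = (1 / 2 : ℝ) • (z - γ • gradh z)
        + (1 / 2 : ℝ) • ((2 : ℝ) • proxf ((2 : ℝ) • PV (z - γ • gradh z) - (z - γ • gradh z))
            - ((2 : ℝ) • PV (z - γ • gradh z) - (z - γ • gradh z))))
    -- unrelaxed FDRS iterates (λ_k ≡ 1), the shadow sequence, and the dual sequence
    (z : ℕ → H) (hz : ∀ k, z (k + 1) = T (z k))
    (xf : ℕ → H)
    (hxf : ∀ k, xf k = proxf ((2 : ℝ) • PV (z k - γ • gradh (z k)) - (z k - γ • gradh (z k))))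
    (y : ℕ → H)
    (hy : ∀ k, y k = -(γ⁻¹ • (z k - PV (z k)))) :
    ∀ k : ℕ,
      y (k + 1) = (y k - τ • xf k) - PV (y k - τ • xf k) ∧
      xf (k + 1) = proxf (xf k - γ • gradh (xf k) + γ • ((2 : ℝ) • y (k + 1) - y k)) := by
  intro k
  set P : H →ₗ[ℝ] H := V.starProjection.toLinearMap
  have hP : IsIdempotentElem P :=
    ContinuousLinearMap.IsIdempotentElem.toLinearMap V.isIdempotentElem_starProjection
  have hPV' : ∀ x, PV x = P x := hPV
  simp only [hPV'] at hgradh hT hxf hy ⊢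
  have hgradh_mem : ∀ x, P (gradh x) = gradh x := fun x => by
    rw [hgradh, hP.apply_apply]
  have hzk : z (k + 1) = xf k + (z k - P (z k)) := by
    rw [hz, hT, ← hxf]
    exact fdrs_step_eq γ (hgradh_mem _) _ _
  have hgrad : gradh (z (k + 1)) = gradh (xf k) := by
    rw [hgradh, hgradh, hzk, hP.apply_add_sub_apply]
  rw [hτ, one_div, hxf (k + 1), hgrad,
    fdrs_primal_update hP hγ.ne' (hgradh_mem _) hzk (hy k) (hy (k + 1))]
  exact ⟨fdrs_dual_update hP hzk (hy k) (hy (k + 1)), rfl⟩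

/-- FDRS is a primal-dual algorithm. -/
theorem fdrs_is_primal_dual
    {H : Type*} [NormedAddCommGroup H] [InnerProductSpace ℝ H] [CompleteSpace H]
    (V : Submodule ℝ H) [CompleteSpace V]
    (PV : H → H) (hPV : ∀ x, PV x = (V.orthogonalProjectionOnto x : H))
    (f g : H → ℝ) (gradg gradh proxf : H → H)
    (β γ τ : ℝ) (hβ : 0 < β) (hγ : 0 < γ) (hτ : τ = 1 / γ)
    (hfconv : ConvexOn ℝ Set.univ f) (hfcont : Continuous f)
    (hgconv : ConvexOn ℝ Set.univ g)
    (hgdiff : ∀ x, HasGradientAt g (gradg x) x)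
    (hglip : LipschitzWith (1 / β).toNNReal gradg)
    (hgradh : ∀ x, gradh x = PV (gradg (PV x)))
    (hprox : ∀ x, IsMinOn (fun y => f y + (1 / (2 * γ)) * ‖y - x‖ ^ 2) Set.univ (proxf x))
    (T : H → H)
    (hT : ∀ z, T z = (1 / 2 : ℝ) • (z - γ • gradh z)
        + (1 / 2 : ℝ) • ((2 : ℝ) • proxf ((2 : ℝ) • PV (z - γ • gradh z) - (z - γ • gradh z))
            - ((2 : ℝ) • PV (z - γ • gradh z) - (z - γ • gradh z))))
    -- unrelaxed FDRS iterates (λ_k ≡ 1), the shadow sequence, and the dual sequence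
    (z : ℕ → H) (hz : ∀ k, z (k + 1) = T (z k))
    (xf : ℕ → H)
    (hxf : ∀ k, xf k = proxf ((2 : ℝ) • PV (z k - γ • gradh (z k)) - (z k - γ • gradh (z k))))
    (y : ℕ → H)
    (hy : ∀ k, y k = -(γ⁻¹ • (z k - PV (z k)))) :
    ∀ k : ℕ,
      y (k + 1) = (y k - τ • xf k) - PV (y k - τ • xf k) ∧
      xf (k + 1) = proxf (xf k - γ • gradh (xf k) + γ • ((2 : ℝ) • y (k + 1) - y k)) :=
  fdrs_is_primal_dual_general V PV hPV gradg gradh proxf γ τ hγ hτ hgradh T hT z hz xf hxf y hy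
end
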